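/- In the asymmetric setting, the reverse-channel profit π_i(b_i) = θD·(v_i - b_i - k_i)·(β_i b_i + γ_r)/(β_i b_i + C_i) with C_i = β_j b_j + 2γ_r is strictly concave in b_i on [0,∞) whenever θD > 0, β_i > 0, γ_r > 0, b_j ≥ 0, and v_i - k_i > 0; hence it admits at most one maximizer on [0,∞). -/
import Mathlib

lemma inv_combo_lt {p q a b : ℝ} (hp : 0 < p) (hq : 0 < q) (hpq : p ≠ q)
    (ha : 0 < a) (hb : 0 < b) (hab : a + b = 1) :
    1 / (a * p + b * q) < a / p + b / q := by
  have hz : 0 < a * p + b * q := by positivity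
  rw [div_add_div _ _ hp.ne' hq.ne', div_lt_div_iff₀ hz (by positivity)]
  have hne : p - q ≠ 0 := sub_ne_zero.mpr hpq
  have h : 0 < (p - q) ^ 2 := by positivity
  have hid : (a * q + p * b) * (a * p + b * q)
      = p * q * (a + b) ^ 2 + a * b * (p - q) ^ 2 := by ring
  have habq : (a + b) ^ 2 = 1 := by rw [hab]; norm_num
  rw [habq, mul_one] at hid
  nlinarith [mul_pos (mul_pos ha hb) h]

/-- asymmetric reverse-channel profit is strictly concave in bᵢ
on [0,∞), hence admits at most one maximizer there. -/
theorem stmt_15 (θD βi βj γ vi ki bj : ℝ) (hθD : 0 < θD) (hβi : 0 < βi)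
    (hβj : 0 < βj) (hγ : 0 < γ) (hbj : 0 ≤ bj) (hvk : 0 < vi - ki)
    (Ci : ℝ) (hCi : Ci = βj * bj + 2 * γ)
    (π : ℝ → ℝ)
    (hπ : ∀ b, π b = θD * ((vi - b - ki) * ((βi * b + γ) / (βi * b + Ci)))) :
    StrictConcaveOn ℝ (Set.Ici (0 : ℝ)) π ∧
    ∀ x y : ℝ, x ∈ Set.Ici (0 : ℝ) → y ∈ Set.Ici (0 : ℝ) →
      (∀ z ∈ Set.Ici (0 : ℝ), π z ≤ π x) →
      (∀ z ∈ Set.Ici (0 : ℝ), π z ≤ π y) → x = y := by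
  have hCpos : 0 < Ci := by rw [hCi]; positivity
  set A : ℝ := (vi - ki) * βi + Ci with hA
  set D : ℝ := Ci - γ with hD
  have hApos : 0 < A := by positivity
  have hDpos : 0 < D := by rw [hD, hCi]; nlinarith [mul_nonneg hβj.le hbj]
  have hm : 0 < θD * A * D / βi := by positivity
  set m : ℝ := θD * A * D / βi with hm'
  set c0 : ℝ := θD * (A + D) / βi - θD * Ci / βi with hc0
  -- representation
  have hu : ∀ b : ℝ, 0 ≤ b → 0 < βi * b + Ci := fun b hb => by positivity
  have hrep : ∀ b : ℝ, 0 ≤ b → π b = c0 - θD * b - m / (βi * b + Ci) := by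
    intro b hb
    have h := (hu b hb).ne'
    rw [hπ, hc0, hm', hA, hD]
    field_simp
    ring
  have hconc : StrictConcaveOn ℝ (Set.Ici (0 : ℝ)) π := by
    refine ⟨convex_Ici 0, fun x hx y hy hxy a b ha hb hab => ?_⟩
    have hx' : (0:ℝ) ≤ x := hx
    have hy' : (0:ℝ) ≤ y := hy
    have hz' : (0:ℝ) ≤ a * x + b * y := by positivity
    rw [smul_eq_mul, smul_eq_mul, smul_eq_mul, smul_eq_mul,
      hrep x hx', hrep y hy', hrep _ hz']
    have hkey := inv_combo_lt (hu x hx') (hu y hy')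
      (by intro h; exact hxy (by nlinarith)) ha hb hab
    have hmkey : m * (1 / (a * (βi * x + Ci) + b * (βi * y + Ci)))
        < m * (a / (βi * x + Ci) + b / (βi * y + Ci)) := by
      apply mul_lt_mul_of_pos_left _ hm
      convert hkey using 2
    have heq : βi * (a * x + b * y) + Ci = a * (βi * x + Ci) + b * (βi * y + Ci) := by
      have : a * Ci + b * Ci = Ci := by rw [← add_mul, hab, one_mul]
      ring_nf
      nlinarith [this]
    rw [heq]
    have hxne := (hu x hx').ne'
    have hyne := (hu y hy').ne'
    have hzne : a * (βi * x + Ci) + b * (βi * y + Ci) ≠ 0 := by positivity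
    have h1 : m / (a * (βi * x + Ci) + b * (βi * y + Ci))
        < a * (m / (βi * x + Ci)) + b * (m / (βi * y + Ci)) := by
      rw [div_eq_mul_one_div m]
      calc m * (1 / (a * (βi * x + Ci) + b * (βi * y + Ci)))
          < m * (a / (βi * x + Ci) + b / (βi * y + Ci)) := hmkey
        _ = a * (m / (βi * x + Ci)) + b * (m / (βi * y + Ci)) := by ring
    have key : c0 - θD * (a * x + b * y) - m / (a * (βi * x + Ci) + b * (βi * y + Ci))
        - (a * (c0 - θD * x - m / (βi * x + Ci)) + b * (c0 - θD * y - m / (βi * y + Ci)))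
        = a * (m / (βi * x + Ci)) + b * (m / (βi * y + Ci))
          - m / (a * (βi * x + Ci) + b * (βi * y + Ci)) := by
      linear_combination (-c0) * hab
    linarith [h1, key]
  refine ⟨hconc, fun x y hx hy hmx hmy => ?_⟩
  exact hconc.eq_of_isMaxOn hmx hmy hx hy
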